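/- arXiv:1702.03541 — 3 statements merged into one kernel-verified Lean document; each statement's English description precedes it below -/
import Mathlib

section
/- Let ι : ℝ⁴ → ℝ⁴ be the involution-type map ι(x₀,x₁,x₂,x₃) = (x₀+π, −x₁, x₂, −x₃), where π here denotes the real number pi. Then ι is a Poisson map for the near-positive bracket: for all smooth f, g : ℝ⁴ → ℝ and all x ∈ ℝ⁴, {f∘ι, g∘ι}(x) = {f,g}(ι(x)). -/
/-- Partial derivative of `f : ℝ⁴ → ℝ` in the `i`-th coordinate direction. -/
noncomputable def pd (i : Fin 4) (f : (Fin 4 → ℝ) → ℝ) (x : Fin 4 → ℝ) : ℝ :=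
  fderiv ℝ f x (Pi.single i 1)

/-- The near-positive Poisson bracket on ℝ⁴ with coordinates (x₀,x₁,x₂,x₃). -/
noncomputable def nearPosBracket (f g : (Fin 4 → ℝ) → ℝ) : (Fin 4 → ℝ) → ℝ :=
  fun x =>
    x 1 * (pd 0 f x * pd 1 g x - pd 1 f x * pd 0 g x
      + pd 2 f x * pd 3 g x - pd 3 f x * pd 2 g x)
    + x 3 * (pd 0 f x * pd 3 g x - pd 3 f x * pd 0 g x
      + pd 1 f x * pd 2 g x - pd 2 f x * pd 1 g x)

/-- The involution-type map ι(x₀,x₁,x₂,x₃) = (x₀+π, −x₁, x₂, −x₃). -/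
noncomputable def iotaMap (x : Fin 4 → ℝ) : Fin 4 → ℝ :=
  ![x 0 + Real.pi, -x 1, x 2, -x 3]

/-- The linear part of `iotaMap`. -/
noncomputable def iotaLin : (Fin 4 → ℝ) →L[ℝ] (Fin 4 → ℝ) :=
  LinearMap.toContinuousLinearMap
  { toFun := fun x => ![x 0, -x 1, x 2, -x 3]
    map_add' := by
      intro a b; funext i; fin_cases i <;> simp <;> ring_nf
    map_smul' := by
      intro c a; funext i; fin_cases i <;> simp }

lemma iotaLin_apply (y : Fin 4 → ℝ) : iotaLin y = ![y 0, -y 1, y 2, -y 3] := rfl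

lemma iotaMap_hasFDeriv (x : Fin 4 → ℝ) : HasFDerivAt iotaMap iotaLin x := by
  have h : iotaMap = fun y => iotaLin y + ![Real.pi, 0, 0, 0] := by
    funext y i
    fin_cases i <;> simp [iotaMap, iotaLin_apply]
  rw [h]
  exact iotaLin.hasFDerivAt.add_const _

lemma pd_comp (f : (Fin 4 → ℝ) → ℝ) (hf : ContDiff ℝ (⊤ : ℕ∞) f) (i : Fin 4)
    (x : Fin 4 → ℝ) :
    pd i (f ∘ iotaMap) x = fderiv ℝ f (iotaMap x) (iotaLin (Pi.single i 1)) := by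
  have h1 : HasFDerivAt f (fderiv ℝ f (iotaMap x)) (iotaMap x) :=
    (hf.differentiable (by simp) _).hasFDerivAt
  have h2 := (h1.comp x (iotaMap_hasFDeriv x)).fderiv
  simp [pd, h2]

lemma iotaLin_single0 : iotaLin (Pi.single (0 : Fin 4) 1) = Pi.single (0 : Fin 4) 1 := by
  funext j; fin_cases j <;> simp [iotaLin_apply, Pi.single_apply]

lemma iotaLin_single1 : iotaLin (Pi.single (1 : Fin 4) 1) = -Pi.single (1 : Fin 4) 1 := by
  funext j; fin_cases j <;> simp [iotaLin_apply, Pi.single_apply]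

lemma iotaLin_single2 : iotaLin (Pi.single (2 : Fin 4) 1) = Pi.single (2 : Fin 4) 1 := by
  funext j; fin_cases j <;> simp [iotaLin_apply, Pi.single_apply]

lemma iotaLin_single3 : iotaLin (Pi.single (3 : Fin 4) 1) = -Pi.single (3 : Fin 4) 1 := by
  funext j; fin_cases j <;> simp [iotaLin_apply, Pi.single_apply]

/-- ι is a Poisson map for the near-positive bracket. -/
theorem iotaMap_poisson (f g : (Fin 4 → ℝ) → ℝ)
    (hf : ContDiff ℝ (⊤ : ℕ∞) f) (hg : ContDiff ℝ (⊤ : ℕ∞) g) (x : Fin 4 → ℝ) :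
    nearPosBracket (f ∘ iotaMap) (g ∘ iotaMap) x = nearPosBracket f g (iotaMap x) := by
  have e1 : iotaMap x 1 = -x 1 := rfl
  have e3 : iotaMap x 3 = -x 3 := rfl
  simp only [nearPosBracket, pd_comp f hf, pd_comp g hg,
    iotaLin_single0, iotaLin_single1, iotaLin_single2, iotaLin_single3,
    map_neg, e1, e3]
  simp only [pd]
  ring
end

section
/- Let f : ℝ⁴ → ℝ be a continuously differentiable function, with coordinates (x₀,x₁,x₂,x₃), satisfying at every point the four equations x₁·∂₁f + x₃·∂₃f = 0, x₁·∂₀f − x₃·∂₂f = 0, x₃·∂₁f − x₁·∂₃f = 0, and x₃·∂₀f + x₁·∂₂f = 0. Then f is constant. -/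
/-- A C¹ Casimir of the near-positive Poisson structure on ℝ⁴ is constant:
the four equations say the Hamiltonian vector field of `f` vanishes identically. -/
theorem nearPos_casimir_constant (f : (Fin 4 → ℝ) → ℝ) (hf : ContDiff ℝ 1 f)
    (h1 : ∀ x : Fin 4 → ℝ, x 1 * pd 1 f x + x 3 * pd 3 f x = 0)
    (h2 : ∀ x : Fin 4 → ℝ, x 1 * pd 0 f x - x 3 * pd 2 f x = 0)
    (h3 : ∀ x : Fin 4 → ℝ, x 3 * pd 1 f x - x 1 * pd 3 f x = 0)
    (h4 : ∀ x : Fin 4 → ℝ, x 3 * pd 0 f x + x 1 * pd 2 f x = 0) :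
    ∃ c : ℝ, ∀ x : Fin 4 → ℝ, f x = c := by
  have hcont : Continuous (fderiv ℝ f) := hf.continuous_fderiv one_ne_zero
  -- all partials vanish at points where x 1 ≠ 0
  have halg : ∀ (i : Fin 4) (x : Fin 4 → ℝ), x 1 ≠ 0 → pd i f x = 0 := by
    intro i x hx1
    have hs : x 1 ^ 2 + x 3 ^ 2 ≠ 0 := by positivity
    fin_cases i
    · have : (x 1 ^ 2 + x 3 ^ 2) * pd 0 f x = 0 := by
        linear_combination x 1 * h2 x + x 3 * h4 x
      exact (mul_eq_zero.mp this).resolve_left hs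
    · have : (x 1 ^ 2 + x 3 ^ 2) * pd 1 f x = 0 := by
        linear_combination x 1 * h1 x + x 3 * h3 x
      exact (mul_eq_zero.mp this).resolve_left hs
    · have : (x 1 ^ 2 + x 3 ^ 2) * pd 2 f x = 0 := by
        linear_combination x 1 * h4 x - x 3 * h2 x
      exact (mul_eq_zero.mp this).resolve_left hs
    · have : (x 1 ^ 2 + x 3 ^ 2) * pd 3 f x = 0 := by
        linear_combination x 3 * h1 x - x 1 * h3 x
      exact (mul_eq_zero.mp this).resolve_left hs
  -- by continuity, all partials vanish everywhere
  have key : ∀ (i : Fin 4) (x : Fin 4 → ℝ), pd i f x = 0 := by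
    intro i x
    have hgc : Continuous (fun y => pd i f y) := by
      unfold pd
      exact hcont.clm_apply continuous_const
    by_cases hx1 : x 1 = 0
    · -- approximate x by points with nonzero first coordinate
      set u : ℕ → (Fin 4 → ℝ) := fun n => Function.update x 1 (1 / (n + 1)) with hu_def
      have hu : Filter.Tendsto u Filter.atTop (nhds x) := by
        rw [tendsto_pi_nhds]
        intro j
        by_cases hj : j = 1
        · subst hj
          simp only [hu_def, Function.update_self, hx1]
          exact tendsto_one_div_add_atTop_nhds_zero_nat
        · simp only [hu_def, Function.update_of_ne hj]
          exact tendsto_const_nhds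
      have hlim : Filter.Tendsto (fun n => pd i f (u n)) Filter.atTop (nhds (pd i f x)) :=
        (hgc.continuousAt).tendsto.comp hu
      have hz : ∀ n, pd i f (u n) = 0 := by
        intro n
        apply halg
        simp only [hu_def, Function.update_self]
        positivity
      rw [show (fun n => pd i f (u n)) = (fun _ => (0:ℝ)) from funext hz] at hlim
      exact (tendsto_nhds_unique tendsto_const_nhds hlim).symm
    · exact halg i x hx1
  -- hence the full derivative vanishes
  have hder : ∀ x, fderiv ℝ f x = 0 := by
    intro x
    apply ContinuousLinearMap.ext
    intro v
    have hv : v = ∑ i : Fin 4, v i • (Pi.single i (1:ℝ) : Fin 4 → ℝ) := by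
      ext j
      simp [Pi.single_apply, Finset.sum_ite_eq']
    conv_lhs => rw [hv]
    rw [map_sum]
    have : ∀ i : Fin 4, (fderiv ℝ f x) (v i • (Pi.single i (1:ℝ) : Fin 4 → ℝ)) = 0 := by
      intro i
      rw [map_smul]
      have := key i x
      unfold pd at this
      simp [this]
    simp [this]
  exact ⟨f 0, fun x => is_const_of_fderiv_eq_zero (hf.differentiable one_ne_zero) hder x 0⟩
end

section
/- For a smooth function f : ℝ⁴ → ℝ (coordinates (x₀,x₁,x₂,x₃)), let X_f be the vector field with components (X_f)₀ = −x₁·∂₁f − x₃·∂₃f, (X_f)₁ = x₁·∂₀f − x₃·∂₂f, (X_f)₂ = x₃·∂₁f − x₁·∂₃f, (X_f)₃ = x₃·∂₀f + x₁·∂₂f. Then for every smooth f the divergence of X_f satisfies Σᵢ ∂ᵢ((X_f)ᵢ) = 2·∂₀f at every point of ℝ⁴. -/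
lemma pd_eq (j : Fin 4) (f : (Fin 4 → ℝ) → ℝ) :
    pd j f = fun y => (ContinuousLinearMap.apply ℝ ℝ (Pi.single j 1 : Fin 4 → ℝ)) (fderiv ℝ f y) := rfl

lemma contDiff_pd (f : (Fin 4 → ℝ) → ℝ) (hf : ContDiff ℝ (⊤ : ℕ∞) f) (j : Fin 4) :
    ContDiff ℝ (⊤ : ℕ∞) (pd j f) := by
  rw [pd_eq]
  exact (ContinuousLinearMap.apply ℝ ℝ (Pi.single j 1 : Fin 4 → ℝ)).contDiff.comp
    (hf.fderiv_right (by
      have : (((⊤+1 : ℕ∞)) : WithTop ℕ∞) ≤ ((⊤:ℕ∞) : WithTop ℕ∞) := by exact_mod_cast le_top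
      simpa using this))

lemma pd_pd (f : (Fin 4 → ℝ) → ℝ) (hf : ContDiff ℝ (⊤ : ℕ∞) f) (i j : Fin 4) (x : Fin 4 → ℝ) :
    pd i (pd j f) x = fderiv ℝ (fderiv ℝ f) x (Pi.single i 1) (Pi.single j 1) := by
  have hd : DifferentiableAt ℝ (fderiv ℝ f) x := by
    have h1 : ContDiff ℝ ((⊤:ℕ∞) : WithTop ℕ∞) (fderiv ℝ f) := hf.fderiv_right (by
      have : (((⊤+1 : ℕ∞)) : WithTop ℕ∞) ≤ ((⊤:ℕ∞) : WithTop ℕ∞) := by exact_mod_cast le_top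
      simpa using this)
    exact (h1.differentiable (by
      have : ((1:ℕ∞) : WithTop ℕ∞) ≤ ((⊤:ℕ∞) : WithTop ℕ∞) := by exact_mod_cast le_top
      simpa using this)).differentiableAt
  have hrepr : pd j f = fun y => fderiv ℝ f y (Pi.single j 1) := rfl
  rw [pd, hrepr, fderiv_clm_apply hd (differentiableAt_const _)]
  simp

lemma pd_symm (f : (Fin 4 → ℝ) → ℝ) (hf : ContDiff ℝ (⊤ : ℕ∞) f) (i j : Fin 4) (x : Fin 4 → ℝ) :
    pd i (pd j f) x = pd j (pd i f) x := by
  rw [pd_pd f hf, pd_pd f hf]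
  exact hf.contDiffAt.isSymmSndFDerivAt (by
    have : ((2:ℕ∞) : WithTop ℕ∞) ≤ ((⊤:ℕ∞) : WithTop ℕ∞) := by exact_mod_cast le_top
    simpa using this) _ _

lemma pd_mul (i j : Fin 4) (g : (Fin 4 → ℝ) → ℝ) (x : Fin 4 → ℝ)
    (hg : DifferentiableAt ℝ g x) :
    pd i (fun y => y j * g y) x = (Pi.single i 1 : Fin 4 → ℝ) j * g x + x j * pd i g x := by
  have hj : DifferentiableAt ℝ (fun y : Fin 4 → ℝ => y j) x :=
    (differentiable_pi.1 differentiable_id _).differentiableAt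
  rw [pd, fderiv_fun_mul hj hg]
  have : fderiv ℝ (fun y : Fin 4 → ℝ => y j) x = ContinuousLinearMap.proj j := by
    exact (ContinuousLinearMap.proj j : (Fin 4 → ℝ) →L[ℝ] ℝ).fderiv
  simp [this, pd, mul_comm]
  ring

/-- The divergence of the Hamiltonian vector field of `f` for the near-positive
Poisson structure on ℝ⁴ equals `2 ∂₀ f`: the modular vector field is `2 ∂₀`. -/
theorem nearPos_modular_field (f : (Fin 4 → ℝ) → ℝ) (hf : ContDiff ℝ (⊤ : ℕ∞) f)
    (x : Fin 4 → ℝ) :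
    pd 0 (fun y => -(y 1) * pd 1 f y - y 3 * pd 3 f y) x
      + pd 1 (fun y => y 1 * pd 0 f y - y 3 * pd 2 f y) x
      + pd 2 (fun y => y 3 * pd 1 f y - y 1 * pd 3 f y) x
      + pd 3 (fun y => y 3 * pd 0 f y + y 1 * pd 2 f y) x
      = 2 * pd 0 f x := by
  have hd : ∀ j : Fin 4, DifferentiableAt ℝ (pd j f) x := fun j =>
    ((contDiff_pd f hf j).differentiable (by
      have : ((1:ℕ∞) : WithTop ℕ∞) ≤ ((⊤:ℕ∞) : WithTop ℕ∞) := by exact_mod_cast le_top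
      simpa using this)).differentiableAt
  have key : ∀ (i j k : Fin 4),
      pd i (fun y => y j * pd k f y) x
        = (Pi.single i 1 : Fin 4 → ℝ) j * pd k f x + x j * pd i (pd k f) x :=
    fun i j k => pd_mul i j (pd k f) x (hd k)
  have neg1 : (fun y : Fin 4 → ℝ => -(y 1) * pd 1 f y - y 3 * pd 3 f y)
      = fun y => -(y 1 * pd 1 f y + y 3 * pd 3 f y) := by funext y; ring
  have h0 : pd 0 (fun y => -(y 1) * pd 1 f y - y 3 * pd 3 f y) x
      = -(pd 0 (fun y => y 1 * pd 1 f y) x + pd 0 (fun y => y 3 * pd 3 f y) x) := by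
    rw [neg1, pd, pd, pd]
    have h1 : DifferentiableAt ℝ (fun y : Fin 4 → ℝ => y 1 * pd 1 f y) x :=
      ((differentiable_pi.1 differentiable_id _).differentiableAt).mul (hd 1)
    have h2 : DifferentiableAt ℝ (fun y : Fin 4 → ℝ => y 3 * pd 3 f y) x :=
      ((differentiable_pi.1 differentiable_id _).differentiableAt).mul (hd 3)
    rw [fderiv_fun_neg, fderiv_fun_add h1 h2]; simp
  have h1 : pd 1 (fun y => y 1 * pd 0 f y - y 3 * pd 2 f y) x
      = pd 1 (fun y => y 1 * pd 0 f y) x - pd 1 (fun y => y 3 * pd 2 f y) x := by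
    rw [pd, pd, pd]
    have ha : DifferentiableAt ℝ (fun y : Fin 4 → ℝ => y 1 * pd 0 f y) x :=
      ((differentiable_pi.1 differentiable_id _).differentiableAt).mul (hd 0)
    have hb : DifferentiableAt ℝ (fun y : Fin 4 → ℝ => y 3 * pd 2 f y) x :=
      ((differentiable_pi.1 differentiable_id _).differentiableAt).mul (hd 2)
    rw [fderiv_fun_sub ha hb]; simp
  have h2 : pd 2 (fun y => y 3 * pd 1 f y - y 1 * pd 3 f y) x
      = pd 2 (fun y => y 3 * pd 1 f y) x - pd 2 (fun y => y 1 * pd 3 f y) x := by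
    rw [pd, pd, pd]
    have ha : DifferentiableAt ℝ (fun y : Fin 4 → ℝ => y 3 * pd 1 f y) x :=
      ((differentiable_pi.1 differentiable_id _).differentiableAt).mul (hd 1)
    have hb : DifferentiableAt ℝ (fun y : Fin 4 → ℝ => y 1 * pd 3 f y) x :=
      ((differentiable_pi.1 differentiable_id _).differentiableAt).mul (hd 3)
    rw [fderiv_fun_sub ha hb]; simp
  have h3 : pd 3 (fun y => y 3 * pd 0 f y + y 1 * pd 2 f y) x
      = pd 3 (fun y => y 3 * pd 0 f y) x + pd 3 (fun y => y 1 * pd 2 f y) x := by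
    rw [pd, pd, pd]
    have ha : DifferentiableAt ℝ (fun y : Fin 4 → ℝ => y 3 * pd 0 f y) x :=
      ((differentiable_pi.1 differentiable_id _).differentiableAt).mul (hd 0)
    have hb : DifferentiableAt ℝ (fun y : Fin 4 → ℝ => y 1 * pd 2 f y) x :=
      ((differentiable_pi.1 differentiable_id _).differentiableAt).mul (hd 2)
    rw [fderiv_fun_add ha hb]; simp
  rw [h0, h1, h2, h3, key, key, key, key, key, key, key, key]
  have s12 := pd_symm f hf 1 2 x
  have s02 := pd_symm f hf 2 3 x
  have s01 := pd_symm f hf 0 1 x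
  have s03 := pd_symm f hf 0 3 x
  have s13 := pd_symm f hf 1 3 x
  rw [s12, s02, s01, s03]
  simp [Pi.single_apply]
  ring
end
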